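/- Let f : ℝ^d → ℝ be twice continuously differentiable with L1-Lipschitz gradient and L2-Lipschitz Hessian, let ε₂ ∈ (0,1), and let H be a symmetric d×d matrix (an inexact Hessian at x) with ‖H − ∇²f(x)‖₂ ≤ ε₃ where 0 ≤ ε₃ ≤ ε₂/12. Let v be a unit vector and define the iH-NCG update: if −(ε₂²/(2·L2²))·vᵀHv − 5·ε₂³/(24·L2²) > ‖∇f(x)‖²/(2·L1), set x⁺ = x − (ε₂/L2)·sign(vᵀ∇f(x))·v; otherwise set x⁺ = x − (1/L1)·∇f(x). Then f(x) − f(x⁺) ≥ max( −(ε₂²/(2·L2²))·vᵀHv − 5·ε₂³/(24·L2²), ‖∇f(x)‖²/(2·L1) ). Moreover, if vᵀHv ≤ −ε₂/2, then f(x) − f(x⁺) ≥ max( ‖∇f(x)‖²/(2·L1), ε₂³/(24·L2²) ). -/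

import Mathlib

open scoped RealInnerProductSpace

noncomputable def sgn (t : ℝ) : ℝ := if 0 ≤ t then 1 else -1

/-!
Along a segment from `x`, a Lipschitz gradient gives `f (x + u) ≤ f x + ⟪∇f x, u⟫ + L₁/2 ‖u‖²`
and a Lipschitz Hessian gives `f (x + u) ≤ f x + ⟪∇f x, u⟫ + ½⟪∇²f x u, u⟫ + L₂/6 ‖u‖³`.
The gradient step of length `1/L₁` therefore gains `‖∇f x‖²/(2L₁)`. The curvature step of length
`ε₂/L₂` along `±v`, with the sign chosen so that the linear term is nonpositive, gains
`-(ε₂²/(2L₂²))⟪∇²f x v, v⟫ - ε₂³/(6L₂²)`, and replacing `∇²f x` by `H` costs at most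
`ε₃ε₂²/(2L₂²) ≤ ε₂³/(24L₂²)`, whence the constant `5/24`. The update takes the step whose
guaranteed gain is larger.
-/

open Set
open scoped Gradient

theorem sub_le_sub_of_hasDerivAt_le {φ ψ φ' ψ' : ℝ → ℝ} {a b : ℝ} (hab : a ≤ b)
    (hφ : ∀ t, HasDerivAt φ (φ' t) t) (hψ : ∀ t, HasDerivAt ψ (ψ' t) t)
    (h : ∀ t ∈ Ioo a b, φ' t ≤ ψ' t) : φ b - φ a ≤ ψ b - ψ a := by
  have hanti : AntitoneOn (fun t => φ t - ψ t) (Icc a b) := by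
    refine antitoneOn_of_hasDerivWithinAt_nonpos (f' := fun t => φ' t - ψ' t) (convex_Icc a b)
      (fun t _ => ((hφ t).sub (hψ t)).continuousAt.continuousWithinAt)
      (fun t _ => ((hφ t).sub (hψ t)).hasDerivWithinAt) fun t ht => ?_
    rw [interior_Icc] at ht
    linarith [h t ht]
  linarith [hanti (left_mem_Icc.2 hab) (right_mem_Icc.2 hab) hab]

theorem abs_sgn (t : ℝ) : |sgn t| = 1 := by
  unfold sgn; split_ifs <;> simp

theorem sgn_mul_self (t : ℝ) : sgn t * t = |t| := by
  unfold sgn; split_ifs with h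
  · rw [one_mul, abs_of_nonneg h]
  · rw [neg_one_mul, abs_of_neg (not_le.1 h)]

section InnerProductSpace

variable {E : Type*} [NormedAddCommGroup E] [InnerProductSpace ℝ E]

theorem HasFDerivAt.hasDerivAt_add_smul {G : Type*} [NormedAddCommGroup G] [NormedSpace ℝ G]
    {F : E → G} {F' : E →L[ℝ] G} {x u : E} {t : ℝ} (hF : HasFDerivAt F F' (x + t • u)) :
    HasDerivAt (fun s : ℝ => F (x + s • u)) (F' u) t := by
  have hline : HasDerivAt (fun s : ℝ => x + s • u) u t := by
    simpa using ((hasDerivAt_id t).smul_const u).const_add x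
  exact hF.comp_hasDerivAt t hline

theorem real_inner_map_self_le_add_norm_sub_mul_sq (B C : E →L[ℝ] E) (v : E) :
    ⟪B v, v⟫ ≤ ⟪C v, v⟫ + ‖B - C‖ * ‖v‖ ^ 2 := by
  have h : ⟪(B - C) v, v⟫ ≤ ‖B - C‖ * ‖v‖ ^ 2 :=
    calc ⟪(B - C) v, v⟫ ≤ ‖(B - C) v‖ * ‖v‖ := real_inner_le_norm _ _
      _ ≤ ‖B - C‖ * ‖v‖ * ‖v‖ := by gcongr; exact (B - C).le_opNorm v
      _ = ‖B - C‖ * ‖v‖ ^ 2 := by ring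
  rw [sub_apply, inner_sub_left] at h
  linarith

variable [CompleteSpace E] {f : E → ℝ}

theorem ContDiff.differentiable_gradient (hf : ContDiff ℝ 2 f) : Differentiable ℝ (∇ f) := by
  have hfd : Differentiable ℝ (fderiv ℝ f) :=
    (hf.fderiv_right (m := 1) (by norm_num)).differentiable (by norm_num)
  exact (InnerProductSpace.toDual ℝ E).symm.toContinuousLinearEquiv.differentiable.comp hfd

theorem hasDerivAt_apply_add_smul {x u : E} {t : ℝ} (hf : DifferentiableAt ℝ f (x + t • u)) :
    HasDerivAt (fun s : ℝ => f (x + s • u)) ⟪∇ f (x + t • u), u⟫ t := by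
  simpa using hf.hasGradientAt.hasFDerivAt.hasDerivAt_add_smul

theorem hasDerivAt_inner_gradient_add_smul {x u : E} {t : ℝ}
    (hg : DifferentiableAt ℝ (∇ f) (x + t • u)) :
    HasDerivAt (fun s : ℝ => ⟪∇ f (x + s • u), u⟫) ⟪fderiv ℝ (∇ f) (x + t • u) u, u⟫ t := by
  simpa using hg.hasFDerivAt.hasDerivAt_add_smul.inner ℝ (hasDerivAt_const t u)

theorem apply_add_le_of_lipschitz_gradient {L : ℝ} (hf : Differentiable ℝ f)
    (hlip : ∀ a b : E, ‖∇ f a - ∇ f b‖ ≤ L * ‖a - b‖) (x u : E) :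
    f (x + u) ≤ f x + ⟪∇ f x, u⟫ + L / 2 * ‖u‖ ^ 2 := by
  have hpoly : ∀ t : ℝ, HasDerivAt (fun s => ⟪∇ f x, u⟫ * s + L / 2 * ‖u‖ ^ 2 * s ^ 2)
      (⟪∇ f x, u⟫ + L * ‖u‖ ^ 2 * t) t := fun t =>
    (((hasDerivAt_id' t).const_mul _).add ((hasDerivAt_pow 2 t).const_mul _)).congr_deriv (by ring)
  suffices hslope : ∀ t ∈ Ioo (0 : ℝ) 1, ⟪∇ f (x + t • u), u⟫ ≤ ⟪∇ f x, u⟫ + L * ‖u‖ ^ 2 * t by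
    have key := sub_le_sub_of_hasDerivAt_le zero_le_one
      (fun t => hasDerivAt_apply_add_smul (hf _)) hpoly hslope
    simp only [one_smul, zero_smul, add_zero] at key
    linarith
  intro t ht
  have hslope : ⟪∇ f (x + t • u) - ∇ f x, u⟫ ≤ L * ‖u‖ ^ 2 * t :=
    calc ⟪∇ f (x + t • u) - ∇ f x, u⟫ ≤ ‖∇ f (x + t • u) - ∇ f x‖ * ‖u‖ := real_inner_le_norm _ _
      _ ≤ L * ‖t • u‖ * ‖u‖ := by gcongr; simpa using hlip (x + t • u) x
      _ = L * ‖u‖ ^ 2 * t := by rw [norm_smul, Real.norm_of_nonneg ht.1.le]; ring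
  rw [inner_sub_left] at hslope
  linarith

theorem apply_add_le_of_lipschitz_hessian {L : ℝ} (hf : Differentiable ℝ f)
    (hg : Differentiable ℝ (∇ f))
    (hlip : ∀ a b : E, ‖fderiv ℝ (∇ f) a - fderiv ℝ (∇ f) b‖ ≤ L * ‖a - b‖) (x u : E) :
    f (x + u) ≤ f x + ⟪∇ f x, u⟫ + 1 / 2 * ⟪fderiv ℝ (∇ f) x u, u⟫ + L / 6 * ‖u‖ ^ 3 := by
  set q := ⟪fderiv ℝ (∇ f) x u, u⟫
  set c := L * ‖u‖ ^ 3
  have hcurv : ∀ t, 0 ≤ t → ⟪fderiv ℝ (∇ f) (x + t • u) u, u⟫ ≤ q + c * t := fun t ht =>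
    calc ⟪fderiv ℝ (∇ f) (x + t • u) u, u⟫
        ≤ q + ‖fderiv ℝ (∇ f) (x + t • u) - fderiv ℝ (∇ f) x‖ * ‖u‖ ^ 2 :=
          real_inner_map_self_le_add_norm_sub_mul_sq _ _ u
      _ ≤ q + L * ‖t • u‖ * ‖u‖ ^ 2 := by gcongr; simpa using hlip (x + t • u) x
      _ = q + c * t := by rw [norm_smul, Real.norm_of_nonneg ht]; ring
  have hquadratic : ∀ s : ℝ, HasDerivAt (fun s => q * s + c / 2 * s ^ 2) (q + c * s) s := fun s =>
    (((hasDerivAt_id' s).const_mul _).add ((hasDerivAt_pow 2 s).const_mul _)).congr_deriv (by ring)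
  have hslope : ∀ t, 0 ≤ t → ⟪∇ f (x + t • u), u⟫ ≤ ⟪∇ f x, u⟫ + q * t + c / 2 * t ^ 2 := by
    intro t ht
    have key := sub_le_sub_of_hasDerivAt_le ht
      (fun s => hasDerivAt_inner_gradient_add_smul (hg _)) hquadratic
      fun s hs => hcurv s hs.1.le
    simp only [zero_smul, add_zero, mul_zero] at key
    linarith
  have hcubic : ∀ t : ℝ, HasDerivAt (fun s => ⟪∇ f x, u⟫ * s + q / 2 * s ^ 2 + c / 6 * s ^ 3)
      (⟪∇ f x, u⟫ + q * t + c / 2 * t ^ 2) t := fun t =>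
    ((((hasDerivAt_id' t).const_mul _).add ((hasDerivAt_pow 2 t).const_mul _)).add
      ((hasDerivAt_pow 3 t).const_mul _)).congr_deriv (by ring)
  have key := sub_le_sub_of_hasDerivAt_le zero_le_one
    (fun t => hasDerivAt_apply_add_smul (hf _)) hcubic fun t ht => hslope t ht.1.le
  simp only [one_smul, zero_smul, add_zero] at key
  linarith

theorem le_sub_apply_gradient_step {L : ℝ} (hL : 0 < L) (hf : Differentiable ℝ f)
    (hlip : ∀ a b : E, ‖∇ f a - ∇ f b‖ ≤ L * ‖a - b‖) (x : E) :
    ‖∇ f x‖ ^ 2 / (2 * L) ≤ f x - f (x - (1 / L) • ∇ f x) := by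
  have h := apply_add_le_of_lipschitz_gradient hf hlip x (-(1 / L) • ∇ f x)
  rw [neg_smul, ← sub_eq_add_neg, inner_neg_right, real_inner_smul_right,
    real_inner_self_eq_norm_sq, norm_neg, norm_smul, Real.norm_of_nonneg (by positivity)] at h
  have hquad : L / 2 * (1 / L * ‖∇ f x‖) ^ 2 = 1 / L * ‖∇ f x‖ ^ 2 - ‖∇ f x‖ ^ 2 / (2 * L) := by
    field_simp; ring
  linarith

theorem apply_sub_smul_sgn_le {L : ℝ} (hf : Differentiable ℝ f) (hg : Differentiable ℝ (∇ f))
    (hlip : ∀ a b : E, ‖fderiv ℝ (∇ f) a - fderiv ℝ (∇ f) b‖ ≤ L * ‖a - b‖) (x : E) {v : E}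
    (hv : ‖v‖ = 1) {η : ℝ} (hη : 0 ≤ η) :
    f (x - (η * sgn ⟪∇ f x, v⟫) • v) ≤
      f x + η ^ 2 / 2 * ⟪fderiv ℝ (∇ f) x v, v⟫ + L / 6 * η ^ 3 := by
  set s := sgn ⟪∇ f x, v⟫
  have hs : |η * s| = η := by rw [abs_mul, abs_sgn, abs_of_nonneg hη, mul_one]
  have h := apply_add_le_of_lipschitz_hessian hf hg hlip x (-(η * s) • v)
  rw [neg_smul, ← sub_eq_add_neg, inner_neg_right, real_inner_smul_right, map_neg, map_smul,
    inner_neg_left, inner_neg_right, real_inner_smul_left, real_inner_smul_right, norm_neg,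
    norm_smul, hv, Real.norm_eq_abs, hs] at h
  have hdesc : 0 ≤ η * s * ⟪∇ f x, v⟫ := by
    rw [mul_assoc, sgn_mul_self]; positivity
  have hsq : η * s * (η * s * ⟪fderiv ℝ (∇ f) x v, v⟫) = η ^ 2 * ⟪fderiv ℝ (∇ f) x v, v⟫ := by
    rw [← mul_assoc, ← sq, ← sq_abs, hs]
  rw [hsq] at h
  linarith

theorem le_sub_apply_curvature_step {L ε ε' : ℝ} (hL : 0 < L) (hε : 0 ≤ ε) (hε' : ε' ≤ ε / 12)
    (hf : Differentiable ℝ f) (hg : Differentiable ℝ (∇ f))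
    (hlip : ∀ a b : E, ‖fderiv ℝ (∇ f) a - fderiv ℝ (∇ f) b‖ ≤ L * ‖a - b‖) (x : E)
    {H : E →L[ℝ] E} (hH : ‖H - fderiv ℝ (∇ f) x‖ ≤ ε') {v : E} (hv : ‖v‖ = 1) :
    -(ε ^ 2 / (2 * L ^ 2)) * ⟪H v, v⟫ - 5 * ε ^ 3 / (24 * L ^ 2) ≤
      f x - f (x - ((ε / L) * sgn ⟪∇ f x, v⟫) • v) := by
  have hstep := apply_sub_smul_sgn_le hf hg hlip x hv (div_nonneg hε hL.le)
  have hcurv : ⟪fderiv ℝ (∇ f) x v, v⟫ ≤ ⟪H v, v⟫ + ε / 12 := by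
    have h := real_inner_map_self_le_add_norm_sub_mul_sq (fderiv ℝ (∇ f) x) H v
    rw [norm_sub_rev, hv, one_pow, mul_one] at h
    linarith
  have hquad : (ε / L) ^ 2 / 2 * ⟪fderiv ℝ (∇ f) x v, v⟫ ≤
      ε ^ 2 / (2 * L ^ 2) * ⟪H v, v⟫ + ε ^ 3 / (24 * L ^ 2) :=
    calc (ε / L) ^ 2 / 2 * ⟪fderiv ℝ (∇ f) x v, v⟫
        ≤ (ε / L) ^ 2 / 2 * (⟪H v, v⟫ + ε / 12) := by gcongr
      _ = ε ^ 2 / (2 * L ^ 2) * ⟪H v, v⟫ + ε ^ 3 / (24 * L ^ 2) := by field_simp; ring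
  have hcubic : L / 6 * (ε / L) ^ 3 = 4 * ε ^ 3 / (24 * L ^ 2) := by field_simp; ring
  have hsplit : 5 * ε ^ 3 / (24 * L ^ 2) = 4 * ε ^ 3 / (24 * L ^ 2) + ε ^ 3 / (24 * L ^ 2) := by
    ring
  linarith

end InnerProductSpace

theorem iH_NCG_step_decrease_general {d : ℕ}
    (f : EuclideanSpace ℝ (Fin d) → ℝ) (L1 L2 ε₂ ε₃ : ℝ)
    (hL1 : 0 < L1) (hL2 : 0 < L2) (hε₂ : 0 < ε₂)
    (hε₃ : ε₃ ≤ ε₂ / 12)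
    (hf : ContDiff ℝ 2 f)
    (hglip : ∀ a b : EuclideanSpace ℝ (Fin d),
      ‖gradient f a - gradient f b‖ ≤ L1 * ‖a - b‖)
    (hHlip : ∀ a b : EuclideanSpace ℝ (Fin d),
      ‖fderiv ℝ (gradient f) a - fderiv ℝ (gradient f) b‖ ≤ L2 * ‖a - b‖)
    (x : EuclideanSpace ℝ (Fin d))
    (H : EuclideanSpace ℝ (Fin d) →L[ℝ] EuclideanSpace ℝ (Fin d))
    (hHapprox : ‖H - fderiv ℝ (gradient f) x‖ ≤ ε₃)
    (v : EuclideanSpace ℝ (Fin d)) (hv : ‖v‖ = 1)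
    (xp : EuclideanSpace ℝ (Fin d))
    (hxp : xp =
      if -(ε₂ ^ 2 / (2 * L2 ^ 2)) * ⟪H v, v⟫ - 5 * ε₂ ^ 3 / (24 * L2 ^ 2) >
          ‖gradient f x‖ ^ 2 / (2 * L1) then
        x - ((ε₂ / L2) * sgn ⟪gradient f x, v⟫) • v
      else
        x - (1 / L1) • gradient f x) :
    f x - f xp ≥
      max (-(ε₂ ^ 2 / (2 * L2 ^ 2)) * ⟪H v, v⟫ - 5 * ε₂ ^ 3 / (24 * L2 ^ 2))
        (‖gradient f x‖ ^ 2 / (2 * L1)) ∧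
    (⟪H v, v⟫ ≤ -ε₂ / 2 →
      f x - f xp ≥
        max (‖gradient f x‖ ^ 2 / (2 * L1)) (ε₂ ^ 3 / (24 * L2 ^ 2))) := by
  set Tcurv := -(ε₂ ^ 2 / (2 * L2 ^ 2)) * ⟪H v, v⟫ - 5 * ε₂ ^ 3 / (24 * L2 ^ 2)
  set Tgrad := ‖∇ f x‖ ^ 2 / (2 * L1)
  have hdf : Differentiable ℝ f := hf.differentiable (by norm_num)
  have hcurv : Tcurv ≤ f x - f (x - ((ε₂ / L2) * sgn ⟪∇ f x, v⟫) • v) :=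
    le_sub_apply_curvature_step hL2 hε₂.le hε₃ hdf hf.differentiable_gradient hHlip x
      hHapprox hv
  have hgrad : Tgrad ≤ f x - f (x - (1 / L1) • ∇ f x) :=
    le_sub_apply_gradient_step hL1 hdf hglip x
  have hdecr : max Tcurv Tgrad ≤ f x - f xp := by
    rw [hxp]
    split_ifs with hchoice
    · exact max_le hcurv (hchoice.le.trans hcurv)
    · exact max_le ((not_lt.1 hchoice).trans hgrad) hgrad
  have hcurv_gain : ⟪H v, v⟫ ≤ -ε₂ / 2 → ε₂ ^ 3 / (24 * L2 ^ 2) ≤ Tcurv := by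
    intro hneg
    have hquad : ε₂ ^ 2 / (2 * L2 ^ 2) * (ε₂ / 2) ≤ -(ε₂ ^ 2 / (2 * L2 ^ 2)) * ⟪H v, v⟫ := by
      rw [neg_mul, ← mul_neg]
      gcongr
      linarith
    have hsplit : ε₂ ^ 2 / (2 * L2 ^ 2) * (ε₂ / 2) =
        ε₂ ^ 3 / (24 * L2 ^ 2) + 5 * ε₂ ^ 3 / (24 * L2 ^ 2) := by
      field_simp; ring
    show _ ≤ -(ε₂ ^ 2 / (2 * L2 ^ 2)) * ⟪H v, v⟫ - 5 * ε₂ ^ 3 / (24 * L2 ^ 2)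
    linarith
  exact ⟨hdecr, fun hneg =>
    (max_le (le_max_right _ _) ((hcurv_gain hneg).trans (le_max_left _ _))).trans hdecr⟩

/-- Lemma on the iH-NCG step: objective decrease of a single iH-NCG step
using an inexact Hessian `H` with `‖H - ∇²f(x)‖₂ ≤ ε₃ ≤ ε₂/12`. -/
theorem iH_NCG_step_decrease {d : ℕ}
    (f : EuclideanSpace ℝ (Fin d) → ℝ) (L1 L2 ε₂ ε₃ : ℝ)
    (hL1 : 0 < L1) (hL2 : 0 < L2) (hε₂ : 0 < ε₂) (hε₂1 : ε₂ < 1)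
    (hε₃0 : 0 ≤ ε₃) (hε₃ : ε₃ ≤ ε₂ / 12)
    (hf : ContDiff ℝ 2 f)
    (hglip : ∀ a b : EuclideanSpace ℝ (Fin d),
      ‖gradient f a - gradient f b‖ ≤ L1 * ‖a - b‖)
    (hHlip : ∀ a b : EuclideanSpace ℝ (Fin d),
      ‖fderiv ℝ (gradient f) a - fderiv ℝ (gradient f) b‖ ≤ L2 * ‖a - b‖)
    (x : EuclideanSpace ℝ (Fin d))
    (H : EuclideanSpace ℝ (Fin d) →L[ℝ] EuclideanSpace ℝ (Fin d))
    (hHsym : ∀ u w : EuclideanSpace ℝ (Fin d), ⟪H u, w⟫ = ⟪u, H w⟫)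
    (hHapprox : ‖H - fderiv ℝ (gradient f) x‖ ≤ ε₃)
    (v : EuclideanSpace ℝ (Fin d)) (hv : ‖v‖ = 1)
    (xp : EuclideanSpace ℝ (Fin d))
    (hxp : xp =
      if -(ε₂ ^ 2 / (2 * L2 ^ 2)) * ⟪H v, v⟫ - 5 * ε₂ ^ 3 / (24 * L2 ^ 2) >
          ‖gradient f x‖ ^ 2 / (2 * L1) then
        x - ((ε₂ / L2) * sgn ⟪gradient f x, v⟫) • v
      else
        x - (1 / L1) • gradient f x) :
    f x - f xp ≥
      max (-(ε₂ ^ 2 / (2 * L2 ^ 2)) * ⟪H v, v⟫ - 5 * ε₂ ^ 3 / (24 * L2 ^ 2))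
        (‖gradient f x‖ ^ 2 / (2 * L1)) ∧
    (⟪H v, v⟫ ≤ -ε₂ / 2 →
      f x - f xp ≥
        max (‖gradient f x‖ ^ 2 / (2 * L1)) (ε₂ ^ 3 / (24 * L2 ^ 2))) :=
  iH_NCG_step_decrease_general f L1 L2 ε₂ ε₃ hL1 hL2 hε₂ hε₃ hf hglip hHlip x H hHapprox v hv xp hxp
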